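/- Let k ≥ 2, σ_i = i(k−i)/2, and let ξ : I → ℝ^k be a C¹ solution of system (P) on an interval I such that ∑_{i=1}^k ξ_i(τ) = 0 for all τ ∈ I and ξ(τ) ≠ 0 for every τ ∈ I. Fix τ₀ ∈ I with [τ₀, τ₀+δ) ⊂ I for some δ > 0, define b_i and B as below, and let J(τ₀) = { i ∈ {1,…,k+1} : b_i(τ₀) = B(τ₀) }. Then there exists ε > 0 with [τ₀, τ₀+ε) ⊂ I such that for every index i ∈ J(τ₀) with 2 ≤ i ≤ k and every t ∈ (τ₀, τ₀+ε), one has b_i(t) < B(τ₀). -/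

import Mathlib

/-- `σᵢ = i(k-i)/2` (so that `σ₀ = σ_k = 0`). -/
noncomputable def sig (k i : ℕ) : ℝ := (i : ℝ) * ((k : ℝ) - (i : ℝ)) / 2

/-- System (P): for `i = 1,…,k`,
`ξᵢ' = σᵢ₋₁(e^{-(ξᵢ-ξᵢ₋₁)} - 1) - σᵢ(e^{-(ξᵢ₊₁-ξᵢ)} - 1)` on the set `S`
(the conventions for `i = 1` and `i = k` are automatic since `σ₀ = σ_k = 0`). -/
def SolvesP (k : ℕ) (ξ : ℕ → ℝ → ℝ) (S : Set ℝ) : Prop :=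
  ∀ i, 1 ≤ i → i ≤ k → ∀ τ ∈ S, HasDerivAt (ξ i)
    (sig k (i - 1) * (Real.exp (-(ξ i τ - ξ (i - 1) τ)) - 1)
      - sig k i * (Real.exp (-(ξ (i + 1) τ - ξ i τ)) - 1)) τ

/-!
Writing `bᵢ` for the fluxes, system (P) reads `ξᵢ' = bᵢ - bᵢ₊₁`, hence
`bᵢ' = -(bᵢ + σᵢ₋₁)(2bᵢ - bᵢ₋₁ - bᵢ₊₁)` with `bᵢ + σᵢ₋₁ > 0`. Whenever `bᵢ` is the largest flux its
derivative is `≤ 0`, so `B` is nonincreasing and all `bⱼ` stay `≤ m := B(τ₀)` on `[τ₀, τ₀ + δ)`.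
At a later time `t`, `bᵢ(t) = m` makes `t` a local maximum of `bᵢ`, so `bᵢ'(t) = 0`, which forces
`bᵢ₋₁(t) = bᵢ₊₁(t) = m`. Thus the indices with `bⱼ(t) = m` spread to their neighbours, and they
cannot fill `1, …, k + 1`: `b₁ = 0`, and if all fluxes vanish then `ξ(t)` is constant in `i`,
hence `0` by the centre-of-mass condition.
-/

open Filter Set Topology

section MaxPrinciple

variable {ι : Type*} {s : Finset ι} (hs : s.Nonempty) {f f' : ι → ℝ → ℝ} {a b x r : ℝ}

include hs in
lemma eventually_finset_sup'_lt_add_mul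
    (hf : ∀ i ∈ s, HasDerivAt (f i) (f' i x) x)
    (hf' : ∀ i ∈ s, f i x = s.sup' hs (f · x) → f' i x ≤ 0) (hr : 0 < r) :
    ∀ᶠ z in 𝓝[>] x, s.sup' hs (f · z) < s.sup' hs (f · x) + r * (z - x) := by
  have key : ∀ i ∈ s, ∀ᶠ z in 𝓝[>] x, f i z < s.sup' hs (f · x) + r * (z - x) := by
    intro i hi
    rcases (Finset.le_sup' (f · x) hi).eq_or_lt with heq | hlt
    · have hslope := (hf i hi).hasDerivWithinAt.limsup_slope_le' (lt_irrefl x)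
        ((hf' i hi heq).trans_lt hr)
      filter_upwards [hslope, self_mem_nhdsWithin] with z hz hxz
      rw [slope_def_field, div_lt_iff₀ (sub_pos.2 hxz)] at hz
      linarith
    · have hnear := ((hf i hi).continuousAt.eventually_lt_const hlt).filter_mono
        (nhdsWithin_le_nhds (s := Ioi x))
      filter_upwards [hnear, self_mem_nhdsWithin] with z hz hxz
      nlinarith [sub_pos.2 (show x < z from hxz)]
  filter_upwards [(eventually_all_finset s).2 key] with z hz
  exact (Finset.sup'_lt_iff hs).2 hz

include hs in
theorem finset_sup'_le_of_hasDerivAt_nonpos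
    (hf : ∀ i ∈ s, ∀ x ∈ Ico a b, HasDerivAt (f i) (f' i x) x)
    (hf' : ∀ i ∈ s, ∀ x ∈ Ico a b, f i x = s.sup' hs (f · x) → f' i x ≤ 0) :
    ∀ t ∈ Ico a b, s.sup' hs (f · t) ≤ s.sup' hs (f · a) := by
  intro t ht
  have hsub : Icc a t ⊆ Ico a b := Icc_subset_Ico_right ht.2
  refine image_le_of_liminf_slope_right_le_deriv_boundary (f := fun x => s.sup' hs (f · x))
    (B := fun _ => s.sup' hs (f · a)) (B' := fun _ => 0) ?_ le_rfl continuousOn_const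
    (fun x _ => hasDerivWithinAt_const x _ _) ?_ ⟨ht.1, le_rfl⟩
  · intro x hx
    exact (ContinuousAt.finset_sup'_apply hs fun i hi =>
      (hf i hi x (hsub hx)).continuousAt).continuousWithinAt
  · intro x hx r hr
    have hx' := hsub (Ico_subset_Icc_self hx)
    refine Eventually.frequently ?_
    filter_upwards [eventually_finset_sup'_lt_add_mul hs (fun i hi => hf i hi x hx')
      (fun i hi => hf' i hi x hx') hr, self_mem_nhdsWithin] with z hz hxz
    rw [slope_def_field, div_lt_iff₀ (sub_pos.2 hxz)]
    linarith

end MaxPrinciple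

lemma HasDerivAt.lt_of_eventually_le {f : ℝ → ℝ} {f' x m : ℝ} (hf : HasDerivAt f f' x)
    (hle : ∀ᶠ y in 𝓝 x, f y ≤ m) (hf' : f x = m → f' ≠ 0) : f x < m := by
  refine hle.self_of_nhds.lt_of_ne fun heq => hf' heq ?_
  exact IsLocalMax.hasDerivAt_eq_zero (hle.mono fun y hy => heq ▸ hy) hf

lemma Nat.forall_of_neighbor {P : ℕ → Prop} {lo hi j : ℕ} (hj : j ∈ Finset.Icc lo hi) (hPj : P j)
    (hstep : ∀ i, lo < i → i < hi → P (i - 1) ∨ P (i + 1) → P i) :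
    ∀ i, lo < i → i < hi → P i := by
  obtain ⟨hlo, hhi⟩ := Finset.mem_Icc.1 hj
  intro i hloi hihi
  rcases le_total j i with hji | hij
  · exact Nat.le_induction (P := fun n _ => n < hi → P n) (fun _ => hPj)
      (fun n hjn ih hn => hstep (n + 1) (by omega) hn (.inl (ih (by omega)))) i hji hihi
  · exact Nat.decreasingInduction (motive := fun n _ => lo < n → P n)
      (fun n hn ih hlon => hstep n hlon (by omega) (.inr (ih (by omega)))) (fun _ => hPj) hij hloi

lemma sig_pos {k j : ℕ} (h1 : 1 ≤ j) (h2 : j < k) : 0 < sig k j := by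
  have h1' : (1 : ℝ) ≤ j := by exact_mod_cast h1
  have h2' : (j : ℝ) < k := by exact_mod_cast h2
  unfold sig
  nlinarith

@[simp] lemma sig_zero (k : ℕ) : sig k 0 = 0 := by simp [sig]

@[simp] lemma sig_self (k : ℕ) : sig k k = 0 := by simp [sig]

/-- The paper's `bᵢ`, extended by `0` outside `2 ≤ i ≤ k`; system (P) reads `ξᵢ' = bᵢ - bᵢ₊₁`. -/
noncomputable def flux (k : ℕ) (ξ : ℕ → ℝ → ℝ) (i : ℕ) (τ : ℝ) : ℝ :=
  if 2 ≤ i ∧ i ≤ k then sig k (i - 1) * (Real.exp (-(ξ i τ - ξ (i - 1) τ)) - 1) else 0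

/-- `bᵢ' = -(bᵢ + σᵢ₋₁)(2bᵢ - bᵢ₋₁ - bᵢ₊₁)`, because `bᵢ + σᵢ₋₁ = σᵢ₋₁ e^{-(ξᵢ - ξᵢ₋₁)}`. -/
noncomputable def fluxDeriv (k : ℕ) (ξ : ℕ → ℝ → ℝ) (i : ℕ) (τ : ℝ) : ℝ :=
  -((flux k ξ i τ + sig k (i - 1)) * (2 * flux k ξ i τ - flux k ξ (i - 1) τ - flux k ξ (i + 1) τ))

section Flux

variable {k : ℕ} {ξ : ℕ → ℝ → ℝ} {i : ℕ} {τ m : ℝ}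

lemma flux_of_mem (h2 : 2 ≤ i) (hk : i ≤ k) :
    flux k ξ i τ = sig k (i - 1) * (Real.exp (-(ξ i τ - ξ (i - 1) τ)) - 1) :=
  if_pos ⟨h2, hk⟩

lemma flux_of_not_mem (h : ¬(2 ≤ i ∧ i ≤ k)) : flux k ξ i τ = 0 := if_neg h

@[simp] lemma flux_one : flux k ξ 1 τ = 0 := flux_of_not_mem (by omega)

lemma flux_add_sig_pos (h2 : 2 ≤ i) (hk : i ≤ k) : 0 < flux k ξ i τ + sig k (i - 1) := by
  rw [flux_of_mem h2 hk]
  nlinarith [sig_pos (k := k) (j := i - 1) (by omega) (by omega), Real.exp_pos (-(ξ i τ - ξ (i - 1) τ))]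

lemma flux_add_sig_nonneg (h1 : 1 ≤ i) (hk : i ≤ k + 1) : 0 ≤ flux k ξ i τ + sig k (i - 1) := by
  by_cases h : 2 ≤ i ∧ i ≤ k
  · exact (flux_add_sig_pos h.1 h.2).le
  · obtain rfl | rfl : i = 1 ∨ i = k + 1 := by omega
    all_goals simp [flux_of_not_mem h]

lemma flux_eq_zero_iff (h2 : 2 ≤ i) (hk : i ≤ k) : flux k ξ i τ = 0 ↔ ξ i τ = ξ (i - 1) τ := by
  rw [flux_of_mem h2 hk, mul_eq_zero, or_iff_right (sig_pos (by omega) (by omega)).ne', sub_eq_zero,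
    Real.exp_eq_one_iff, neg_eq_zero, sub_eq_zero]

lemma flux_le_finset_sup' (hs : (Finset.Icc 1 (k + 1)).Nonempty) (j : ℕ) :
    flux k ξ j τ ≤ (Finset.Icc 1 (k + 1)).sup' hs (flux k ξ · τ) := by
  by_cases hj : j ∈ Finset.Icc 1 (k + 1)
  · exact Finset.le_sup' (flux k ξ · τ) hj
  · rw [flux_of_not_mem (by simp only [Finset.mem_Icc] at hj; omega)]
    exact flux_one.symm.trans_le (Finset.le_sup' (flux k ξ · τ) (by simp))

lemma fluxDeriv_nonpos (h1 : 1 ≤ i) (hk : i ≤ k + 1) (hmax : ∀ j, flux k ξ j τ ≤ flux k ξ i τ) :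
    fluxDeriv k ξ i τ ≤ 0 := by
  unfold fluxDeriv
  have := hmax (i - 1)
  have := hmax (i + 1)
  exact neg_nonpos.2 (mul_nonneg (flux_add_sig_nonneg h1 hk) (by linarith))

lemma fluxDeriv_neg (h2 : 2 ≤ i) (hk : i ≤ k) (hle : ∀ j, flux k ξ j τ ≤ m)
    (hlt : flux k ξ (i - 1) τ < m ∨ flux k ξ (i + 1) τ < m) (hi : flux k ξ i τ = m) :
    fluxDeriv k ξ i τ < 0 := by
  unfold fluxDeriv
  have := hle (i - 1)
  have := hle (i + 1)
  exact neg_neg_of_pos (mul_pos (flux_add_sig_pos h2 hk) (by rcases hlt with h | h <;> linarith))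

lemma eq_of_forall_flux_eq_zero (h : ∀ j, 2 ≤ j → j ≤ k → flux k ξ j τ = 0) :
    ∀ i, 1 ≤ i → i ≤ k → ξ i τ = ξ 1 τ := by
  intro i h1
  induction i, h1 using Nat.le_induction with
  | base => exact fun _ => rfl
  | succ n hn ih =>
    intro hk
    rw [(flux_eq_zero_iff (by omega) hk).1 (h _ (by omega) hk)]
    exact ih (by omega)

lemma exists_flux_lt (hsum : ∑ i ∈ Finset.Icc 1 k, ξ i τ = 0) (hne : ∃ i, 1 ≤ i ∧ i ≤ k ∧ ξ i τ ≠ 0)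
    (hle : ∀ j, flux k ξ j τ ≤ m) : ∃ j ∈ Finset.Icc 1 (k + 1), flux k ξ j τ < m := by
  by_contra! hge
  have hm : m = 0 := le_antisymm (by simpa using hge 1 (by simp)) (by simpa using hle 1)
  have hconst := eq_of_forall_flux_eq_zero fun j h2 hk =>
    le_antisymm (hm ▸ hle j) (hm ▸ hge j (Finset.mem_Icc.2 ⟨by omega, by omega⟩))
  obtain ⟨i, h1, hk, hi⟩ := hne
  rw [Finset.sum_congr rfl fun j hj => hconst j (Finset.mem_Icc.1 hj).1 (Finset.mem_Icc.1 hj).2,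
    Finset.sum_const, Nat.card_Icc, nsmul_eq_mul, mul_eq_zero] at hsum
  rcases hsum with hk0 | h0
  · norm_cast at hk0; omega
  · exact hi (by rw [hconst i h1 hk, h0])

end Flux

namespace SolvesP

variable {k : ℕ} {ξ : ℕ → ℝ → ℝ} {I : Set ℝ} {i : ℕ} {τ m : ℝ}

lemma hasDerivAt_flux_sub_flux (hξ : SolvesP k ξ I) (h1 : 1 ≤ i) (hk : i ≤ k) (hτ : τ ∈ I) :
    HasDerivAt (ξ i) (flux k ξ i τ - flux k ξ (i + 1) τ) τ := by
  convert hξ i h1 hk τ hτ using 2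
  · by_cases h2 : 2 ≤ i
    · exact flux_of_mem h2 hk
    · obtain rfl : i = 1 := by omega
      simp
  · by_cases hik : i < k
    · exact flux_of_mem (by omega) hik
    · obtain rfl : i = k := by omega
      simp [flux_of_not_mem]

lemma hasDerivAt_flux (hξ : SolvesP k ξ I) (h1 : 1 ≤ i) (hk : i ≤ k + 1) (hτ : τ ∈ I) :
    HasDerivAt (flux k ξ i) (fluxDeriv k ξ i τ) τ := by
  by_cases h : 2 ≤ i ∧ i ≤ k
  · have hgap := (hξ.hasDerivAt_flux_sub_flux (by omega) h.2 hτ).sub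
      (hξ.hasDerivAt_flux_sub_flux (i := i - 1) (by omega) (by omega) hτ)
    rw [Nat.sub_add_cancel (by omega)] at hgap
    have hexp := ((hgap.neg.exp).sub_const 1).const_mul (sig k (i - 1))
    refine (hexp.congr_of_eventuallyEq (.of_forall fun t => flux_of_mem h.1 h.2)).congr_deriv ?_
    simp only [fluxDeriv, flux_of_mem h.1 h.2 (τ := τ), Pi.neg_apply, Pi.sub_apply]
    ring
  · have hzero : flux k ξ i = fun _ => 0 := funext fun t => flux_of_not_mem h
    obtain rfl | rfl : i = 1 ∨ i = k + 1 := by omega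
    all_goals simpa [fluxDeriv, hzero] using hasDerivAt_const τ (0 : ℝ)

lemma flux_lt_of_neighbor (hξ : SolvesP k ξ I) (h2 : 2 ≤ i) (hk : i ≤ k) (hτ : τ ∈ I)
    (hle : ∀ j, ∀ᶠ t in 𝓝 τ, flux k ξ j t ≤ m)
    (hlt : flux k ξ (i - 1) τ < m ∨ flux k ξ (i + 1) τ < m) : flux k ξ i τ < m :=
  (hξ.hasDerivAt_flux (by omega) (by omega) hτ).lt_of_eventually_le (hle i) fun heq =>
    (fluxDeriv_neg h2 hk (fun j => (hle j).self_of_nhds) hlt heq).ne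

end SolvesP

/-- if `ξ` solves (P) on the interval `I`, has zero center of mass and never
vanishes on `I`, and if `τ₀ ∈ I` with `[τ₀, τ₀+δ) ⊆ I` for some `δ > 0`, then there is
`ε > 0` with `[τ₀, τ₀+ε) ⊆ I` such that for every `i ∈ J(τ₀)` (i.e. `bᵢ(τ₀) = B(τ₀)`)
with `2 ≤ i ≤ k` and every `t ∈ (τ₀, τ₀+ε)`, one has `bᵢ(t) < B(τ₀)`. -/
theorem stmt6 (k : ℕ) (I : Set ℝ)
    (ξ : ℕ → ℝ → ℝ) (hξ : SolvesP k ξ I)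
    (hsum : ∀ τ ∈ I, ∑ i ∈ Finset.Icc 1 k, ξ i τ = 0)
    (hne : ∀ τ ∈ I, ∃ i, 1 ≤ i ∧ i ≤ k ∧ ξ i τ ≠ 0)
    (τ₀ : ℝ) (δ : ℝ) (hδ : 0 < δ) (hδI : Set.Ico τ₀ (τ₀ + δ) ⊆ I)
    (b : ℕ → ℝ → ℝ)
    (hb : ∀ i τ, b i τ = if 2 ≤ i ∧ i ≤ k then
      sig k (i - 1) * (Real.exp (-(ξ i τ - ξ (i - 1) τ)) - 1) else 0)
    (B : ℝ → ℝ)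
    (hB : ∀ τ, B τ
      = (Finset.Icc 1 (k + 1)).sup' (Finset.nonempty_Icc.mpr (by omega)) (fun i => b i τ)) :
    ∃ ε > 0, Set.Ico τ₀ (τ₀ + ε) ⊆ I ∧
      ∀ i, 2 ≤ i → i ≤ k → b i τ₀ = B τ₀ →
        ∀ t ∈ Set.Ioo τ₀ (τ₀ + ε), b i t < B τ₀ := by
  obtain rfl : b = flux k ξ := funext fun i => funext (hb i)
  have hB_le : ∀ t ∈ Ico τ₀ (τ₀ + δ), B t ≤ B τ₀ := by
    simp only [hB]
    refine finset_sup'_le_of_hasDerivAt_nonpos _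
      (fun i hi x hx => hξ.hasDerivAt_flux (Finset.mem_Icc.1 hi).1 (Finset.mem_Icc.1 hi).2 (hδI hx))
      fun i hi x _ hmax => fluxDeriv_nonpos (Finset.mem_Icc.1 hi).1 (Finset.mem_Icc.1 hi).2
        fun j => hmax ▸ flux_le_finset_sup' _ j
  refine ⟨δ, hδ, hδI, fun i hi2 hik _ t ht => ?_⟩
  have htI : t ∈ I := hδI (Ioo_subset_Ico_self ht)
  have hle : ∀ j, ∀ᶠ y in 𝓝 t, flux k ξ j y ≤ B τ₀ := fun j =>
    eventually_of_mem (isOpen_Ioo.mem_nhds ht) fun y hy =>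
      (hB y ▸ flux_le_finset_sup' _ j).trans (hB_le y (Ioo_subset_Ico_self hy))
  obtain ⟨j, hj, hjt⟩ := exists_flux_lt (hsum t htI) (hne t htI) fun j => (hle j).self_of_nhds
  exact Nat.forall_of_neighbor (P := fun n => flux k ξ n t < B τ₀) hj hjt
    (fun n h1 h2 => hξ.flux_lt_of_neighbor (by omega) (by omega) htI hle) i (by omega) (by omega)
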